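/- Let Λ be a normal greedoid over a finite alphabet Σ with an aligned polymatroid representation ρ. Then ρ is pointwise bounded above by the greatest representation: ρ(X) ≤ ρ♮(X) for every X ⊆ Σ. -/

import Mathlib

namespace PaperPG

def letters {A : Type*} (w : List A) : Set A := {x | x ∈ w}

/-- A greedoid over alphabet `A`: a nonempty simple hereditary language with exchange. -/
structure Greedoid (A : Type*) where
  lang : Set (List A)
  lang_nonempty : lang.Nonempty
  simple : ∀ w ∈ lang, w.Nodup
  hereditary : ∀ α β : List A, α ++ β ∈ lang → α ∈ lang
  exchange : ∀ α ∈ lang, ∀ β ∈ lang, β.length < α.length →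
      ∃ x ∈ letters α, β ++ [x] ∈ lang

/-- Kernel of a flat: union of the letter sets of its members. -/
def flatKernel {A : Type*} (F : Set (List A)) : Set A := {y : A | ∃ β ∈ F, y ∈ β}

namespace Greedoid

variable {A : Type*} (G : Greedoid A)

/-- `X` is feasible if it is the set of letters of a feasible word. -/
def Feasible (X : Set A) : Prop := ∃ α ∈ G.lang, letters α = X

/-- The interval property. -/
def IntervalProperty : Prop :=
  ∀ X Y Z : Set A, G.Feasible X → G.Feasible Y → G.Feasible Z →
    X ⊆ Y → Y ⊆ Z → ∀ x : A, x ∉ Z →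
      G.Feasible (X ∪ {x}) → G.Feasible (Z ∪ {x}) → G.Feasible (Y ∪ {x})

/-- A loop is a letter occurring in no feasible word. -/
def IsLoop (x : A) : Prop := ∀ α ∈ G.lang, x ∉ α

/-- A greedoid is normal if it has no loops. -/
def Normal : Prop := ∀ x : A, ¬ G.IsLoop x

/-- Greedoid rank: maximum length of a feasible word with letters inside `X`. -/
noncomputable def rank (X : Set A) : ℕ :=
  sSup {n : ℕ | ∃ α ∈ G.lang, letters α ⊆ X ∧ α.length = n}

/-- Greedoid span. -/
def spanR (X : Set A) : Set A := {y : A | G.rank (X ∪ {y}) = G.rank X}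

/-- Kernel of a set. -/
def kernel (X : Set A) : Set A :=
  {y : A | ∃ β ∈ G.lang, letters β ⊆ G.spanR X ∧ y ∈ β}

/-- Continuations of a word. -/
def cont (α : List A) : Set A := {x : A | α ++ [x] ∈ G.lang}

/-- The flat (equivalence class under equal continuations) of a word. -/
def flatOf (α : List A) : Set (List A) := {β ∈ G.lang | G.cont β = G.cont α}

def IsFlat (F : Set (List A)) : Prop := ∃ α ∈ G.lang, F = G.flatOf α


/-- Order on flats: `[α] ⊑ [β]` iff some `αγ ∈ Λ` with `αγ ∼ β`. -/
def flatLE (F F' : Set (List A)) : Prop :=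
  ∃ α ∈ F, ∃ γ : List A, α ++ γ ∈ G.lang ∧ (α ++ γ) ∈ F'

def flatLT (F F' : Set (List A)) : Prop := G.flatLE F F' ∧ F ≠ F'

/-- Covering relation on flats. -/
def flatCovBy (F F' : Set (List A)) : Prop :=
  G.flatLT F F' ∧ ∀ E : Set (List A), G.IsFlat E → G.flatLT F E → G.flatLT E F' → False

/-- `M` is a meet of the flats `F` and `F'`. -/
def IsMeet (M F F' : Set (List A)) : Prop :=
  G.IsFlat M ∧ G.flatLE M F ∧ G.flatLE M F' ∧
    ∀ E : Set (List A), G.IsFlat E → G.flatLE E F → G.flatLE E F' → G.flatLE E M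

/-- A basic word: one of maximum length. -/
def Basic (w : List A) : Prop := w ∈ G.lang ∧ ∀ v ∈ G.lang, v.length ≤ w.length

/-- Optimism: every non-loop is a continuation of some prefix of every basic word. -/
def Optimistic : Prop :=
  ∀ y : A, ¬ G.IsLoop y → ∀ w : List A, G.Basic w →
    ∃ i ≤ w.length, y ∈ G.cont (w.take i)

/-- The greatest representation `ρ♮`. -/
noncomputable def rhoNat (X : Set A) : ℕ :=
  sInf {n : ℕ | ∃ α ∈ G.lang, X ⊆ G.kernel (letters α) ∧ α.length = n}

end Greedoid

/-- A polymatroid rank function: normalized, monotone, submodular. -/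
def IsPolymatroid {A : Type*} (ρ : Set A → ℝ) : Prop :=
  ρ ∅ = 0 ∧ (∀ X Y : Set A, X ⊆ Y → ρ X ≤ ρ Y) ∧
    ∀ X Y : Set A, ρ (X ∪ Y) + ρ (X ∩ Y) ≤ ρ X + ρ Y

/-- `ρ` represents `G`: the language consists exactly of the simple words each of whose
prefixes of length `i` has rank `i`. -/
def Represents {A : Type*} (ρ : Set A → ℝ) (G : Greedoid A) : Prop :=
  ∀ w : List A, w ∈ G.lang ↔
    (w.Nodup ∧ ∀ i : ℕ, i < w.length → ρ (letters (w.take (i + 1))) = (i + 1 : ℝ))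

/-- Polymatroid span. -/
def spanP {A : Type*} (ρ : Set A → ℝ) (X : Set A) : Set A :=
  {y : A | ρ (X ∪ {y}) = ρ X}

/-- Closed sets of a polymatroid. -/
def ClosedP {A : Type*} (ρ : Set A → ℝ) (X : Set A) : Prop := spanP ρ X = X

/-- Covering relation on the closed sets of `ρ`, ordered by inclusion. -/
def closedCovBy {A : Type*} (ρ : Set A → ℝ) (S S' : Set A) : Prop :=
  ClosedP ρ S ∧ ClosedP ρ S' ∧ S ⊂ S' ∧
    ∀ T : Set A, ClosedP ρ T → S ⊂ T → T ⊂ S' → False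

/-- Alignment of a representation. -/
def Aligned {A : Type*} (G : Greedoid A) (ρ : Set A → ℝ) : Prop :=
  ∃ φ : Set (List A) → Set A,
    (∀ F, G.IsFlat F → ClosedP ρ (φ F)) ∧
    (∀ F F', G.IsFlat F → G.IsFlat F' → G.flatLE F F' → φ F ⊆ φ F') ∧
    (∀ α ∈ G.lang, ρ (letters α) = ρ (φ (G.flatOf α))) ∧
    (∀ α ∈ G.lang, letters α ⊆ φ (G.flatOf α)) ∧
    (∀ F F', G.IsFlat F → G.IsFlat F' → G.flatCovBy F F' → closedCovBy ρ (φ F) (φ F'))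

/-- The maps `φ* : F ↦ σ_ρ(κ(F))` and `φ_* : S ↦ κ⁻¹(S)` are well-defined order-preserving
maps between the flats of `G` and the closed sets of `ρ` forming a Galois connection in
which `φ*` preserves the covering relation of the flats. -/
def GaloisPair {A : Type*} (G : Greedoid A) (ρ : Set A → ℝ) : Prop :=
  (∀ F, G.IsFlat F → ClosedP ρ (spanP ρ (flatKernel F))) ∧
  (∀ F F', G.IsFlat F → G.IsFlat F' → G.flatLE F F' →
      spanP ρ (flatKernel F) ⊆ spanP ρ (flatKernel F')) ∧
  (∀ S, ClosedP ρ S → ∃! F, G.IsFlat F ∧ flatKernel F = G.kernel S) ∧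
  (∀ S S', ClosedP ρ S → ClosedP ρ S' → S ⊆ S' →
      ∀ F F', G.IsFlat F → flatKernel F = G.kernel S →
        G.IsFlat F' → flatKernel F' = G.kernel S' → G.flatLE F F') ∧
  (∀ F, G.IsFlat F → ∀ S, ClosedP ρ S → ∀ F', G.IsFlat F' → flatKernel F' = G.kernel S →
      (spanP ρ (flatKernel F) ⊆ S ↔ G.flatLE F F')) ∧
  (∀ F F', G.IsFlat F → G.IsFlat F' → G.flatCovBy F F' →
      closedCovBy ρ (spanP ρ (flatKernel F)) (spanP ρ (flatKernel F')))

section Aux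

variable {A : Type*} (G : Greedoid A)

lemma letters_append (u v : List A) : letters (u ++ v) = letters u ∪ letters v := by
  ext x; simp [letters]

lemma letters_nil : letters ([] : List A) = (∅ : Set A) := by
  ext x; simp [letters]

namespace Greedoid

lemma nil_mem : ([] : List A) ∈ G.lang := by
  obtain ⟨w, hw⟩ := G.lang_nonempty
  exact G.hereditary [] w hw

lemma rank_set_nonempty (X : Set A) :
    {n : ℕ | ∃ α ∈ G.lang, letters α ⊆ X ∧ α.length = n}.Nonempty :=
  ⟨0, [], G.nil_mem, by simp [letters_nil], rfl⟩

lemma rank_set_bdd [Fintype A] (X : Set A) :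
    BddAbove {n : ℕ | ∃ α ∈ G.lang, letters α ⊆ X ∧ α.length = n} := by
  refine ⟨Fintype.card A, ?_⟩
  rintro n ⟨α, hα, -, rfl⟩
  exact (G.simple α hα).length_le_card

lemma le_rank [Fintype A] (X : Set A) (w : List A) (hw : w ∈ G.lang)
    (hsub : letters w ⊆ X) : w.length ≤ G.rank X :=
  le_csSup (G.rank_set_bdd X) ⟨w, hw, hsub, rfl⟩

lemma rank_le (X : Set A) (n : ℕ)
    (h : ∀ w ∈ G.lang, letters w ⊆ X → w.length ≤ n) : G.rank X ≤ n := by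
  refine csSup_le (G.rank_set_nonempty X) ?_
  rintro m ⟨w, hw, hsub, rfl⟩
  exact h w hw hsub

lemma length_le_of_letters_subset (w α : List A) (hw : w.Nodup) (hα : α.Nodup)
    (hsub : letters w ⊆ letters α) : w.length ≤ α.length := by
  classical
  have h1 : w.toFinset ⊆ α.toFinset := by
    intro x hx
    simp only [List.mem_toFinset] at hx ⊢
    exact hsub hx
  have := Finset.card_le_card h1
  rwa [List.toFinset_card_of_nodup hw, List.toFinset_card_of_nodup hα] at this

lemma rank_letters [Fintype A] (α : List A) (hα : α ∈ G.lang) :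
    G.rank (letters α) = α.length := by
  refine le_antisymm (G.rank_le _ _ ?_) (G.le_rank _ _ hα subset_rfl)
  intro w hw hsub
  exact length_le_of_letters_subset w α (G.simple w hw) (G.simple α hα) hsub

lemma not_mem_of_append_singleton_nodup {α : List A} {z : A}
    (h : (α ++ [z]).Nodup) : z ∉ letters α := by
  rw [List.nodup_append] at h
  intro hz
  exact h.2.2 z hz z (by simp) rfl

/-- Key bound: if the letters of `β` lie in the greedoid span of the letters of `α`,
then every feasible word with letters in `letters α ∪ letters β` has length at most
`α.length`. -/
lemma key_bound [Fintype A] (α β : List A) (hα : α ∈ G.lang)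
    (hβ : letters β ⊆ G.spanR (letters α)) :
    ∀ w ∈ G.lang, letters w ⊆ letters α ∪ letters β → w.length ≤ α.length := by
  intro w hw hsub
  by_contra h
  push_neg at h
  obtain ⟨z, hz, hαz⟩ := G.exchange w hw α hα h
  have hznα : z ∉ letters α := not_mem_of_append_singleton_nodup (G.simple _ hαz)
  have hzβ : z ∈ letters β := (hsub hz).resolve_left hznα
  have hspan : G.rank (letters α ∪ {z}) = G.rank (letters α) := hβ hzβ
  have h1 : (α ++ [z]).length ≤ G.rank (letters α ∪ {z}) := by
    refine G.le_rank _ _ hαz ?_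
    rw [letters_append]
    apply Set.union_subset_union subset_rfl
    intro x hx
    simp only [letters, List.mem_singleton, Set.mem_setOf_eq] at hx
    simp [hx]
  rw [hspan, G.rank_letters α hα] at h1
  simp at h1

lemma extend_aux [Fintype A] (α : List A) (hα : α ∈ G.lang) (β : List A) :
    ∀ k : ℕ, ∀ δ : List A, δ ∈ G.lang → letters δ ⊆ letters α ∪ letters β →
      δ.length + k = α.length →
      ∃ ε : List A, δ <+: ε ∧ ε ∈ G.lang ∧ letters ε ⊆ letters α ∪ letters β ∧
        ε.length = α.length := by
  intro k
  induction k with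
  | zero => intro δ hδ hsub hlen; exact ⟨δ, List.prefix_refl δ, hδ, hsub, by omega⟩
  | succ k ih =>
    intro δ hδ hsub hlen
    obtain ⟨x, hx, hδx⟩ := G.exchange α hα δ hδ (by omega)
    have hsub' : letters (δ ++ [x]) ⊆ letters α ∪ letters β := by
      rw [letters_append]
      refine Set.union_subset hsub ?_
      intro y hy
      simp only [letters, List.mem_singleton, Set.mem_setOf_eq] at hy
      exact Or.inl (hy ▸ hx)
    obtain ⟨ε, hpre, hε, hεsub, hεlen⟩ := ih (δ ++ [x]) hδx hsub' (by simp; omega)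
    exact ⟨ε, (δ.prefix_append [x]).trans hpre, hε, hεsub, hεlen⟩

lemma cont_eq [Fintype A] (α β δ : List A) (hα : α ∈ G.lang) (hδ : δ ∈ G.lang)
    (hβ : letters β ⊆ G.spanR (letters α))
    (hsub : letters δ ⊆ letters α ∪ letters β) (hlen : δ.length = α.length) :
    G.cont δ = G.cont α := by
  have key := G.key_bound α β hα hβ
  ext x
  simp only [Greedoid.cont, Set.mem_setOf_eq]
  constructor
  · intro hx
    obtain ⟨y, hy, hαy⟩ := G.exchange (δ ++ [x]) hx α hα (by simp; omega)
    rw [letters_append] at hy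
    rcases hy with hy | hy
    · exfalso
      have : (α ++ [y]).length ≤ α.length := by
        refine key _ hαy ?_
        rw [letters_append]
        refine Set.union_subset (Set.subset_union_left) ?_
        intro z hz
        simp only [letters, List.mem_singleton, Set.mem_setOf_eq] at hz
        exact hsub (hz ▸ hy)
      simp at this
    · simp only [letters, List.mem_singleton, Set.mem_setOf_eq] at hy
      rwa [hy] at hαy
  · intro hx
    obtain ⟨y, hy, hδy⟩ := G.exchange (α ++ [x]) hx δ hδ (by simp; omega)
    rw [letters_append] at hy
    rcases hy with hy | hy
    · exfalso
      have : (δ ++ [y]).length ≤ α.length := by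
        refine key _ hδy ?_
        rw [letters_append]
        refine Set.union_subset hsub ?_
        intro z hz
        simp only [letters, List.mem_singleton, Set.mem_setOf_eq] at hz
        exact Or.inl (hz ▸ hy)
      simp [hlen] at this
    · simp only [letters, List.mem_singleton, Set.mem_setOf_eq] at hy
      rwa [hy] at hδy

/-- If `β` is feasible with letters in the span of the letters of `α`, then the flat
of `β` is below the flat of `α`. -/
lemma flatLE_of_letters_subset_span [Fintype A] (α β : List A)
    (hα : α ∈ G.lang) (hβ : β ∈ G.lang)
    (hβs : letters β ⊆ G.spanR (letters α)) :
    G.flatLE (G.flatOf β) (G.flatOf α) := by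
  have hβlen : β.length ≤ α.length :=
    G.key_bound α β hα hβs β hβ Set.subset_union_right
  obtain ⟨ε, ⟨γ, rfl⟩, hε, hεsub, hεlen⟩ :=
    G.extend_aux α hα β (α.length - β.length) β hβ Set.subset_union_right (by omega)
  refine ⟨β, ⟨hβ, rfl⟩, γ, hε, hε, ?_⟩
  exact G.cont_eq α β (β ++ γ) hα hε hβs hεsub hεlen

lemma rho_letters {ρ : Set A → ℝ} (hpm : IsPolymatroid ρ) (hrep : Represents ρ G)
    (α : List A) (hα : α ∈ G.lang) : ρ (letters α) = α.length := by
  obtain ⟨hnd, h⟩ := (hrep α).mp hα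
  cases α with
  | nil => simpa [letters_nil] using hpm.1
  | cons a l =>
    have h2 := h l.length (by simp)
    have h3 : (a :: l).take (l.length + 1) = a :: l := by
      rw [show l.length + 1 = (a :: l).length from rfl, List.take_length]
    rw [h3] at h2
    rw [h2]
    simp

end Greedoid

end Aux

/-- Every aligned representation is pointwise bounded above by the greatest
representation `ρ♮`. -/
theorem aligned_le_rhoNat {A : Type*} [Fintype A] (G : Greedoid A)
    (hnorm : G.Normal) (ρ : Set A → ℝ)
    (hpm : IsPolymatroid ρ) (hrep : Represents ρ G) (hal : Aligned G ρ) :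
    ∀ X : Set A, ρ X ≤ (G.rhoNat X : ℝ) := by
  intro X
  obtain ⟨φ, hφ1, hφ2, hφ3, hφ4, hφ5⟩ := hal
  -- the defining set of `rhoNat X` is nonempty, witnessed by a word of maximum length
  have hLne : {n : ℕ | ∃ w ∈ G.lang, w.length = n}.Nonempty := ⟨0, [], G.nil_mem, rfl⟩
  have hLbdd : BddAbove {n : ℕ | ∃ w ∈ G.lang, w.length = n} := by
    refine ⟨Fintype.card A, ?_⟩
    rintro n ⟨w, hw, rfl⟩
    exact (G.simple w hw).length_le_card
  obtain ⟨w, hw, hwlen⟩ := Nat.sSup_mem hLne hLbdd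
  have hmax : ∀ v ∈ G.lang, v.length ≤ w.length := fun v hv =>
    hwlen ▸ le_csSup hLbdd ⟨v, hv, rfl⟩
  have hwker : X ⊆ G.kernel (letters w) := by
    intro y _
    have hnl := hnorm y
    simp only [Greedoid.IsLoop, not_forall] at hnl
    obtain ⟨β, hβ, hyβ⟩ := hnl
    refine ⟨β, hβ, ?_, by simpa using hyβ⟩
    intro z _
    show G.rank (letters w ∪ {z}) = G.rank (letters w)
    have h1 : G.rank (letters w ∪ {z}) ≤ w.length := G.rank_le _ _ fun v hv _ => hmax v hv
    have h2 : w.length ≤ G.rank (letters w ∪ {z}) :=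
      G.le_rank _ _ hw Set.subset_union_left
    rw [G.rank_letters w hw]
    omega
  have hSne : {n : ℕ | ∃ α ∈ G.lang, X ⊆ G.kernel (letters α) ∧ α.length = n}.Nonempty :=
    ⟨w.length, w, hw, hwker, rfl⟩
  obtain ⟨α, hα, hXker, hαlen⟩ := Nat.sInf_mem hSne
  have hrhoNat : G.rhoNat X = α.length := hαlen.symm
  rw [hrhoNat]
  -- the kernel of `letters α` is contained in `φ (flatOf α)`
  have hker_sub : G.kernel (letters α) ⊆ φ (G.flatOf α) := by
    rintro y ⟨β, hβ, hβs, hyβ⟩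
    have hle : G.flatLE (G.flatOf β) (G.flatOf α) :=
      G.flatLE_of_letters_subset_span α β hα hβ hβs
    have hsub : φ (G.flatOf β) ⊆ φ (G.flatOf α) :=
      hφ2 _ _ ⟨β, hβ, rfl⟩ ⟨α, hα, rfl⟩ hle
    exact hsub (hφ4 β hβ hyβ)
  have hXsub : X ⊆ φ (G.flatOf α) := fun y hy => hker_sub (hXker hy)
  calc ρ X ≤ ρ (φ (G.flatOf α)) := hpm.2.1 _ _ hXsub
    _ = ρ (letters α) := (hφ3 α hα).symm
    _ = α.length := G.rho_letters hpm hrep α hα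

end PaperPG
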